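/- Fix k ∈ ℕ and a real r ≥ 0 with max{k,r} > 0. For every complex number z with cos(Im z) > 0, the ratio (Σ_{j=k}^n e^{z·j}·⌈n,j⌉_r·⦃j,k⦄_r / L(n,k)_r) / exp((k+r)·(log n)·(e^z - 1)) converges, as n → ∞, to Γ(k+2r)/Γ((k+r)e^z + r), where Γ denotes the complex Gamma function. (That is, the r-Lah distributions Lah(n,k)_r converge in the mod-Poisson sense with parameters λ_n = (k+r)·log n and limiting function Ψ(z) = Γ(k+2r)/Γ((k+r)e^z + r).) -/

import Mathlib

open Finset Filter MeasureTheory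

/-- r-Stirling numbers of the first kind. -/
noncomputable def stirFir (r : ℝ) : ℕ → ℕ → ℝ
  | 0, 0 => 1
  | 0, _ + 1 => 0
  | n + 1, 0 => ((n : ℝ) + r) * stirFir r n 0
  | n + 1, k + 1 => ((n : ℝ) + r) * stirFir r n (k + 1) + stirFir r n k

/-- r-Stirling numbers of the second kind. -/
noncomputable def stirSec (r : ℝ) : ℕ → ℕ → ℝ
  | 0, 0 => 1
  | 0, _ + 1 => 0
  | n + 1, 0 => r * stirSec r n 0
  | n + 1, k + 1 => ((k : ℝ) + 1 + r) * stirSec r n (k + 1) + stirSec r n k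

/-- The r-Lah number L(n,k)_r. -/
noncomputable def lahNum (r : ℝ) (n k : ℕ) : ℝ :=
  ∑ j ∈ Finset.Icc k n, stirFir r n j * stirSec r j k

/-- The probability mass function of the r-Lah distribution. -/
noncomputable def lahPMF (r : ℝ) (n k j : ℕ) : ℝ :=
  stirFir r n j * stirSec r j k / lahNum r n k

/-- The expectation of the r-Lah distribution. -/
noncomputable def lahExp (r : ℝ) (n k : ℕ) : ℝ :=
  (∑ j ∈ Finset.Icc k n, (j : ℝ) * stirFir r n j * stirSec r j k) / lahNum r n k


/-!
With `P(a, n) = a (a + 1) ⋯ (a + n - 1)`, the generating function `Σ_j ⌈n,j⌉_r y^j = P(y + r, n)`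
and the explicit formula `⦃j,k⦄_r = Σ_{i ≤ k} (-1)^(k-i) (i + r)^j / (i! (k-i)!)` give
`Σ_j x^j ⌈n,j⌉_r ⦃j,k⦄_r = Σ_{i ≤ k} (-1)^(k-i) / (i! (k-i)!) · P((i + r) x + r, n)`.
By Gauss's product formula for `Γ`, `P(a, n) / P(b, n) ~ n^(a-b) Γ(b) / Γ(a)`, so for `Re x > 0`
the term `i = k` dominates; comparing `x = e^z` with `x = 1` leaves
`n^((k+r)(e^z-1)) Γ(k + 2r) / Γ((k + r) e^z + r)`.
-/

open Nat Topology

lemma stirFir_eq_zero_of_lt (r : ℝ) {n j : ℕ} (h : n < j) : stirFir r n j = 0 := by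
  induction n generalizing j with
  | zero => obtain ⟨j, rfl⟩ := Nat.exists_eq_add_one_of_ne_zero (by omega : j ≠ 0); rfl
  | succ n ih =>
    obtain ⟨j, rfl⟩ := Nat.exists_eq_add_one_of_ne_zero (by omega : j ≠ 0)
    simp only [stirFir, ih (by omega : n < j + 1), ih (by omega : n < j), mul_zero, add_zero]

lemma stirSec_eq_zero_of_lt (r : ℝ) {j k : ℕ} (h : j < k) : stirSec r j k = 0 := by
  induction j generalizing k with
  | zero => obtain ⟨k, rfl⟩ := Nat.exists_eq_add_one_of_ne_zero (by omega : k ≠ 0); rfl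
  | succ j ih =>
    obtain ⟨k, rfl⟩ := Nat.exists_eq_add_one_of_ne_zero (by omega : k ≠ 0)
    simp only [stirSec, ih (by omega : j < k + 1), ih (by omega : j < k), mul_zero, add_zero]

theorem sum_stirFir_mul_pow (r : ℝ) (n : ℕ) (y : ℂ) :
    ∑ j ∈ range (n + 1), (stirFir r n j : ℂ) * y ^ j = ∏ t ∈ range n, (y + r + t) := by
  induction n with
  | zero => simp [stirFir]
  | succ n ih =>
    have hshift := sum_range_succ' (fun j => (stirFir r n j : ℂ) * y ^ j) (n + 1)
    rw [sum_range_succ, stirFir_eq_zero_of_lt r (Nat.lt_succ_self n), Complex.ofReal_zero,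
      zero_mul, add_zero] at hshift
    rw [prod_range_succ, ← ih, sum_range_succ',
      show ∀ s : ℂ, s * (y + r + n) = y * s + (n + r) * s from fun s => by ring]
    nth_rewrite 2 [hshift]
    rw [mul_add, mul_sum, mul_sum, ← add_assoc, ← sum_add_distrib]
    congr 1
    · refine sum_congr rfl fun j _ => ?_
      simp only [stirFir]
      push_cast
      ring
    · simp [stirFir]

lemma sum_range_neg_one_pow_div_factorial_mul_factorial (k : ℕ) :
    ∑ i ∈ range (k + 1), (-1 : ℝ) ^ (k - i) / (i ! * (k - i)!) = if k = 0 then 1 else 0 := by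
  have hbinom := add_pow (1 : ℝ) (-1) k
  simp only [add_neg_cancel, zero_pow_eq, one_pow, one_mul] at hbinom
  calc ∑ i ∈ range (k + 1), (-1 : ℝ) ^ (k - i) / (i ! * (k - i)!)
      = (∑ i ∈ range (k + 1), (-1 : ℝ) ^ (k - i) * k.choose i) / k ! := by
        rw [sum_div]
        refine sum_congr rfl fun i hi => ?_
        rw [Nat.cast_choose ℝ (Nat.lt_succ_iff.mp (mem_range.mp hi))]
        field_simp
    _ = if k = 0 then 1 else 0 := by
        rw [← hbinom]
        split_ifs with hk <;> simp [hk]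

lemma neg_one_pow_div_factorial_mul_factorial_succ {k i : ℕ} (hi : i ≤ k) :
    (-1 : ℝ) ^ (k + 1 - i) / (i ! * (k + 1 - i)!) * (i - (k + 1)) =
      (-1) ^ (k - i) / (i ! * (k - i)!) := by
  rw [show k + 1 - i = k - i + 1 by omega, pow_succ, factorial_succ, Nat.cast_mul,
    Nat.cast_add_one, Nat.cast_sub hi]
  have hk : (k : ℝ) - i + 1 ≠ 0 := by
    have : (i : ℝ) ≤ k := by exact_mod_cast hi
    linarith
  field_simp
  ring

theorem stirSec_eq_sum (r : ℝ) (j k : ℕ) :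
    stirSec r j k = ∑ i ∈ range (k + 1), (-1) ^ (k - i) / (i ! * (k - i)! : ℝ) * (i + r) ^ j := by
  induction j generalizing k with
  | zero =>
    simp only [pow_zero, mul_one, sum_range_neg_one_pow_div_factorial_mul_factorial]
    cases k <;> rfl
  | succ j ih =>
    cases k with
    | zero => simp [stirSec, ih, pow_succ, mul_comm]
    | succ k =>
      -- `i + r = (k + 1 + r) + (i - (k + 1))`, and the second part lowers `k + 1` to `k`
      have hlower : ∑ i ∈ range (k + 1), (-1) ^ (k - i) / (i ! * (k - i)! : ℝ) * (i + r) ^ j =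
          ∑ i ∈ range (k + 2), (-1) ^ (k + 1 - i) / (i ! * (k + 1 - i)! : ℝ) * (i - (k + 1)) *
            (i + r) ^ j := by
        rw [sum_range_succ _ (k + 1), Nat.cast_add_one, sub_self, mul_zero, zero_mul, add_zero]
        exact sum_congr rfl fun i hi => by
          rw [neg_one_pow_div_factorial_mul_factorial_succ (Nat.lt_succ_iff.mp (mem_range.mp hi))]
      rw [stirSec, ih, ih, hlower, mul_sum, ← sum_add_distrib]
      refine sum_congr rfl fun i _ => ?_
      ring

theorem sum_pow_mul_stirFir_mul_stirSec (r : ℝ) (n k : ℕ) (x : ℂ) :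
    ∑ j ∈ Icc k n, x ^ j * ((stirFir r n j * stirSec r j k : ℝ) : ℂ) =
      ∑ i ∈ range (k + 1), ((-1) ^ (k - i) / (i ! * (k - i)!) : ℂ) *
        ∏ t ∈ range n, ((i + r) * x + r + t) := by
  have hIcc : ∑ j ∈ Icc k n, x ^ j * ((stirFir r n j * stirSec r j k : ℝ) : ℂ) =
      ∑ j ∈ range (n + 1), x ^ j * ((stirFir r n j * stirSec r j k : ℝ) : ℂ) := by
    refine sum_subset (fun j hj => mem_range.mpr (by grind)) fun j hj hjk => ?_
    rw [stirSec_eq_zero_of_lt r (by grind), mul_zero, Complex.ofReal_zero, mul_zero]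
  rw [hIcc]
  simp_rw [← sum_stirFir_mul_pow]
  simp only [stirSec_eq_sum, Complex.ofReal_mul, Complex.ofReal_sum, mul_sum]
  rw [sum_comm]
  refine sum_congr rfl fun i _ => sum_congr rfl fun j _ => ?_
  rw [mul_pow]
  push_cast
  ring

lemma ne_neg_natCast_of_re_pos {s : ℂ} (hs : 0 < s.re) (m : ℕ) : s ≠ -m := by
  rintro rfl
  simp only [Complex.neg_re, Complex.natCast_re, Left.neg_pos_iff] at hs
  linarith [(m.cast_nonneg : (0 : ℝ) ≤ m)]

lemma prod_add_natCast_ne_zero {a : ℂ} (ha : ∀ m : ℕ, a ≠ -m) (n : ℕ) :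
    ∏ t ∈ range n, (a + t) ≠ 0 :=
  prod_ne_zero_iff.mpr fun t _ h => ha t (eq_neg_of_add_eq_zero_left h)

open Complex in
theorem tendsto_prod_div_prod_div_cpow {a b : ℂ} (ha : ∀ m : ℕ, a ≠ -m) (hb : ∀ m : ℕ, b ≠ -m) :
    Tendsto (fun n : ℕ => (∏ t ∈ range n, (a + t)) / (∏ t ∈ range n, (b + t)) / (n : ℂ) ^ (a - b))
      atTop (𝓝 (Gamma b / Gamma a)) := by
  have hGamma := (GammaSeq_tendsto_Gamma b).div (GammaSeq_tendsto_Gamma a) (Gamma_ne_zero ha)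
  -- `GammaSeq` uses `n + 1` factors; the extra factors `a + n`, `b + n` have ratio tending to 1
  have hshift := (tendsto_natCast_div_add_atTop a).div (tendsto_natCast_div_add_atTop b) one_ne_zero
  rw [← mul_one (Gamma b / Gamma a), ← div_one (1 : ℂ)]
  refine (hGamma.mul hshift).congr' ?_
  filter_upwards [eventually_ne_atTop 0] with n hn
  have hn' : (n : ℂ) ≠ 0 := Nat.cast_ne_zero.mpr hn
  have han : a + n ≠ 0 := fun h => ha n (eq_neg_of_add_eq_zero_left h)
  have hbn : b + n ≠ 0 := fun h => hb n (eq_neg_of_add_eq_zero_left h)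
  have hfac : (n ! : ℂ) ≠ 0 := Nat.cast_ne_zero.mpr n.factorial_ne_zero
  simp only [Pi.div_apply, GammaSeq, prod_range_succ, cpow_sub _ _ hn', add_comm (n : ℂ)]
  field_simp

lemma tendsto_natCast_cpow_atTop_zero {w : ℂ} (hw : w.re < 0) :
    Tendsto (fun n : ℕ => (n : ℂ) ^ w) atTop (𝓝 0) := by
  rw [tendsto_zero_iff_norm_tendsto_zero]
  simp_rw [Complex.norm_natCast_cpow_of_re_ne_zero _ hw.ne]
  simpa [Function.comp_def] using
    (tendsto_rpow_neg_atTop (neg_pos.mpr hw)).comp tendsto_natCast_atTop_atTop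

theorem tendsto_prod_div_prod_zero {a b : ℂ} (hb : ∀ m : ℕ, b ≠ -m) (hab : a.re < b.re) :
    Tendsto (fun n : ℕ => (∏ t ∈ range n, (a + t)) / ∏ t ∈ range n, (b + t)) atTop (𝓝 0) := by
  by_cases ha : ∀ m : ℕ, a ≠ -m
  · have hlim := (tendsto_prod_div_prod_div_cpow ha hb).mul
      (tendsto_natCast_cpow_atTop_zero (w := a - b) (by simpa using hab))
    rw [mul_zero] at hlim
    refine hlim.congr' ?_
    filter_upwards [eventually_ne_atTop 0] with n hn
    exact div_mul_cancel₀ _ (Complex.cpow_ne_zero_iff.mpr (Or.inl (Nat.cast_ne_zero.mpr hn)))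
  · simp only [not_forall, not_not] at ha
    obtain ⟨m, rfl⟩ := ha
    refine tendsto_const_nhds.congr' ?_
    filter_upwards [eventually_gt_atTop m] with n hn
    rw [prod_eq_zero (mem_range.mpr hn) (neg_add_cancel _), zero_div]

theorem tendsto_sum_mul_prod_div_prod (w a : ℕ → ℂ) {k : ℕ} (hk : ∀ m : ℕ, a k ≠ -m)
    (hlt : ∀ i < k, (a i).re < (a k).re) :
    Tendsto (fun n : ℕ => (∑ i ∈ range (k + 1), w i * ∏ t ∈ range n, (a i + t)) /
      ∏ t ∈ range n, (a k + t)) atTop (𝓝 (w k)) := by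
  have hlower : Tendsto (fun n : ℕ => ∑ i ∈ range k,
      w i * ((∏ t ∈ range n, (a i + t)) / ∏ t ∈ range n, (a k + t))) atTop (𝓝 0) := by
    simpa using tendsto_finsetSum (range k) fun i hi =>
      (tendsto_prod_div_prod_zero hk (hlt i (mem_range.mp hi))).const_mul (w i)
  rw [← zero_add (w k)]
  refine (hlower.add_const (w k)).congr fun n => ?_
  rw [sum_range_succ, add_div, sum_div, mul_div_assoc, div_self (prod_add_natCast_ne_zero hk n),
    mul_one]
  simp_rw [mul_div_assoc]

lemma re_natCast_add_ofReal_mul_add_ofReal (i : ℕ) (r : ℝ) (x : ℂ) :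
    (((i : ℂ) + r) * x + r).re = (i + r) * x.re + r := by
  simp

theorem tendsto_sum_pow_mul_stirFir_mul_stirSec_div_prod {r : ℝ} (hr : 0 ≤ r) {k : ℕ}
    (hkr : 0 < (k : ℝ) + r) {x : ℂ} (hx : 0 < x.re) :
    Tendsto (fun n : ℕ => (∑ j ∈ Icc k n, x ^ j * ((stirFir r n j * stirSec r j k : ℝ) : ℂ)) /
      ∏ t ∈ range n, ((k + r) * x + r + t)) atTop (𝓝 (1 / k ! : ℂ)) := by
  simp_rw [sum_pow_mul_stirFir_mul_stirSec]
  have hdom := tendsto_sum_mul_prod_div_prod (fun i => ((-1) ^ (k - i) / (i ! * (k - i)!) : ℂ))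
    (fun i => ((i : ℂ) + r) * x + r)
    (ne_neg_natCast_of_re_pos (by rw [re_natCast_add_ofReal_mul_add_ofReal]; positivity))
    fun i hi => by
      rw [re_natCast_add_ofReal_mul_add_ofReal, re_natCast_add_ofReal_mul_add_ofReal]
      gcongr
  simpa using hdom

lemma exp_ofReal_mul_log_mul_eq_natCast_cpow {n : ℕ} (hn : n ≠ 0) (c : ℝ) (w : ℂ) :
    Complex.exp ((c * Real.log n : ℝ) * w) = (n : ℂ) ^ (c * w) := by
  rw [Complex.cpow_def_of_ne_zero (Nat.cast_ne_zero.mpr hn), ← Complex.natCast_log]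
  push_cast
  ring_nf

theorem rLah_mod_poisson (k : ℕ) (r : ℝ) (hr : 0 ≤ r) (hmax : 0 < k ∨ 0 < r)
    (z : ℂ) (hz : 0 < Real.cos z.im) :
    Tendsto (fun n : ℕ =>
        ((∑ j ∈ Finset.Icc k n,
            Complex.exp (z * (j : ℂ)) * ((stirFir r n j * stirSec r j k : ℝ) : ℂ)) /
          ((lahNum r n k : ℝ) : ℂ)) /
        Complex.exp ((((k : ℝ) + r) * Real.log n : ℝ) * (Complex.exp z - 1)))
      atTop
      (nhds (Complex.Gamma (((k : ℝ) + 2 * r : ℝ) : ℂ) /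
        Complex.Gamma ((((k : ℝ) + r : ℝ) : ℂ) * Complex.exp z + ((r : ℝ) : ℂ)))) := by
  have hx : 0 < (Complex.exp z).re := by rw [Complex.exp_re]; exact mul_pos (Real.exp_pos _) hz
  have hkr : 0 < (k : ℝ) + r := by rcases hmax with h | h <;> positivity
  have hpole (y : ℂ) (hy : 0 < y.re) : ∀ m : ℕ, ((k : ℂ) + r) * y + r ≠ -m :=
    ne_neg_natCast_of_re_pos (by rw [re_natCast_add_ofReal_mul_add_ofReal]; positivity)
  have hfac : (1 / k ! : ℂ) ≠ 0 := by simp [factorial_ne_zero]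
  have hlim := ((tendsto_sum_pow_mul_stirFir_mul_stirSec_div_prod hr hkr hx).div
    (tendsto_sum_pow_mul_stirFir_mul_stirSec_div_prod hr hkr (x := 1) one_pos) hfac).mul
    (tendsto_prod_div_prod_div_cpow (hpole _ hx) (hpole 1 one_pos))
  rw [div_self hfac, one_mul] at hlim
  have hGamma : Complex.Gamma (((k : ℝ) + 2 * r : ℝ) : ℂ) /
      Complex.Gamma ((((k : ℝ) + r : ℝ) : ℂ) * Complex.exp z + r) =
      Complex.Gamma ((k + r) * 1 + r) / Complex.Gamma ((k + r) * Complex.exp z + r) := by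
    push_cast
    ring_nf
  rw [hGamma]
  refine hlim.congr' ?_
  filter_upwards [eventually_ne_atTop 0] with n hn
  have hlah : (lahNum r n k : ℂ) =
      ∑ j ∈ Icc k n, 1 ^ j * ((stirFir r n j * stirSec r j k : ℝ) : ℂ) := by
    simp [lahNum]
  have hcancel (a b c p q : ℂ) (hp : p ≠ 0) (hq : q ≠ 0) :
      a / p / (b / q) * (p / q / c) = a / b / c := by
    field_simp
  simp_rw [mul_comm z, Complex.exp_nat_mul]
  rw [hlah, exp_ofReal_mul_log_mul_eq_natCast_cpow hn, show (((k : ℝ) + r : ℝ) : ℂ) *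
    (Complex.exp z - 1) = (k + r) * Complex.exp z + r - ((k + r) * 1 + r) by push_cast; ring]
  exact hcancel _ _ _ _ _ (prod_add_natCast_ne_zero (hpole _ hx) n)
    (prod_add_natCast_ne_zero (hpole 1 one_pos) n)
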